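/- arXiv:1805.10709 — 8 statements merged into one kernel-verified Lean document; each statement's English description precedes it below -/
import Mathlib

section
/- Let t be a rational number with t ∉ {0, ±1}, and let u = 2t/(t²-1). Then the point P = (2u/(t+1)², 4t(t²+2t-1)(t²+1)/((t+1)⁵(t-1)³)) lies on the elliptic curve E: y² = x(x+1)(x+u⁴) and has order exactly 8 in E(ℚ). -/
/-!
On `y² = x³ + Ax² + Bx` with `B = c²`, the tangent at a point with `x = c` has slope `ℓ` with
`ℓ² = A + 2c`, so it passes through `(0, 0)`: these points halve the 2-torsion point `(0, 0)`.
Here `B = u⁴`, and the tangent-line doubling of `P` gives `2P = (u², -u²(u² + 1))`, so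
`4P = (0, 0) ≠ 0` and `8P = 0`. The `y`-coordinate of `P` is nonzero because `(t + 1)² ≠ 2`
for rational `t`.
-/

namespace WeierstrassCurve.Affine

variable {F : Type*} [Field F]

abbrev twoTorsionModel (A B : F) : Affine F :=
  { a₁ := 0, a₂ := A, a₃ := 0, a₄ := B, a₆ := 0 }

variable {A B : F}

lemma twoTorsionModel_nonsingular {x y : F} (heq : y ^ 2 = x ^ 3 + A * x ^ 2 + B * x)
    (hy : 2 * y ≠ 0) : (twoTorsionModel A B).Nonsingular x y := by
  refine (nonsingular_iff _ _).mpr ⟨(equation_iff _ _).mpr ?_, Or.inr ?_⟩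
  · linear_combination heq
  · contrapose! hy
    dsimp only at hy
    linear_combination hy

lemma twoTorsionModel_nonsingular_zero (hB : B ≠ 0) :
    (twoTorsionModel A B).Nonsingular 0 0 :=
  nonsingular_zero.mpr ⟨rfl, Or.inr hB⟩

variable [DecidableEq F]

lemma twoTorsionModel_two_nsmul_zero (h : (twoTorsionModel A B).Nonsingular 0 0) :
    2 • Point.some _ _ h = 0 := by
  rw [two_nsmul]
  exact Point.add_self_of_Y_eq (by simp [negY])

lemma twoTorsionModel_two_nsmul_some {x y x' y' ℓ : F} (h : (twoTorsionModel A B).Nonsingular x y)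
    (h' : (twoTorsionModel A B).Nonsingular x' y') (hy : 2 * y ≠ 0)
    (hℓ : 2 * y * ℓ = 3 * x ^ 2 + 2 * A * x + B) (hx' : x' = ℓ ^ 2 - A - 2 * x)
    (hy' : y' = ℓ * (x - x') - y) :
    2 • Point.some _ _ h = Point.some _ _ h' := by
  have hneg : y ≠ (twoTorsionModel A B).negY x y := by
    simp only [negY, zero_mul, sub_zero]
    contrapose! hy
    linear_combination hy
  have hslope : (twoTorsionModel A B).slope x x y y = ℓ := by
    rw [slope_of_Y_ne rfl hneg, div_eq_iff (sub_ne_zero.mpr hneg)]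
    simp only [negY]
    linear_combination -hℓ
  rw [two_nsmul, Point.add_self_of_Y_ne hneg]
  congr 1
  · simp only [hslope, addX, hx']
    ring
  · simp only [hslope, addY, negAddY, addX, negY, hy', hx']
    ring

lemma twoTorsionModel_two_nsmul_eq_zero_zero {c y : F} (hc : B = c ^ 2)
    (h : (twoTorsionModel A B).Nonsingular c y) (h₀ : (twoTorsionModel A B).Nonsingular 0 0)
    (hy : 2 * y ≠ 0) (heq : y ^ 2 = c ^ 2 * (2 * c + A)) :
    2 • Point.some _ _ h = Point.some _ _ h₀ :=
  have : y ≠ 0 := right_ne_zero_of_mul hy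
  twoTorsionModel_two_nsmul_some h h₀ hy (ℓ := c * (2 * c + A) / y)
    (by field_simp; rw [hc]; ring) (by field_simp; linear_combination heq * (2 * c + A))
    (by field_simp; linear_combination heq)

end WeierstrassCurve.Affine

open WeierstrassCurve.Affine

lemma Rat.sq_ne_two (q : ℚ) : q ^ 2 ≠ 2 := fun h =>
  ((irrational_sqrt_ratCast_iff (q := 2)).mp (by exact_mod_cast irrational_sqrt_two)).1
    ⟨q, by rw [← h, sq]⟩

section Family

variable {t u : ℚ}

lemma family_point_y_ne_zero (ht0 : t ≠ 0) (hm : t - 1 ≠ 0) (hp : t + 1 ≠ 0) :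
    4 * t * (t ^ 2 + 2 * t - 1) * (t ^ 2 + 1) / ((t + 1) ^ 5 * (t - 1) ^ 3) ≠ 0 := by
  have hr : t ^ 2 + 2 * t - 1 ≠ 0 := fun h => Rat.sq_ne_two (t + 1) (by linear_combination h)
  positivity

lemma family_point_equation (hm : t - 1 ≠ 0) (hp : t + 1 ≠ 0) (hu : u = 2 * t / (t ^ 2 - 1)) :
    (4 * t * (t ^ 2 + 2 * t - 1) * (t ^ 2 + 1) / ((t + 1) ^ 5 * (t - 1) ^ 3)) ^ 2 =
      (2 * u / (t + 1) ^ 2) ^ 3 + (1 + u ^ 4) * (2 * u / (t + 1) ^ 2) ^ 2 +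
        u ^ 4 * (2 * u / (t + 1) ^ 2) := by
  have hs : t ^ 2 - 1 ≠ 0 := by convert mul_ne_zero hm hp using 1; ring
  subst hu
  field_simp
  ring

lemma family_two_nsmul (ht0 : t ≠ 0) (hm : t - 1 ≠ 0) (hp : t + 1 ≠ 0)
    (hu : u = 2 * t / (t ^ 2 - 1))
    (hP : (twoTorsionModel (1 + u ^ 4) (u ^ 4)).Nonsingular (2 * u / (t + 1) ^ 2)
      (4 * t * (t ^ 2 + 2 * t - 1) * (t ^ 2 + 1) / ((t + 1) ^ 5 * (t - 1) ^ 3)))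
    (hQ : (twoTorsionModel (1 + u ^ 4) (u ^ 4)).Nonsingular (u ^ 2) (-(u ^ 2 * (u ^ 2 + 1)))) :
    2 • Point.some _ _ hP = Point.some _ _ hQ := by
  have hy := family_point_y_ne_zero ht0 hm hp
  have hs : t ^ 2 - 1 ≠ 0 := by convert mul_ne_zero hm hp using 1; ring
  subst hu
  refine twoTorsionModel_two_nsmul_some hP hQ (mul_ne_zero two_ne_zero hy)
    (ℓ := (t ^ 4 + 4 * t - 1) / (t ^ 2 - 1) ^ 2) ?_ ?_ ?_ <;> field_simp <;> ring

end Family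

/-- The point `P = (2u/(t+1)², 4t(t²+2t-1)(t²+1)/((t+1)⁵(t-1)³))` lies on the elliptic
curve `E : y² = x(x+1)(x+u⁴)`, where `u = 2t/(t²-1)`, and has order exactly 8. -/
theorem stmt_0 (t : ℚ) (ht0 : t ≠ 0) (ht1 : t ≠ 1) (htm1 : t ≠ -1)
    (u : ℚ) (hu : u = 2 * t / (t ^ 2 - 1))
    (W : WeierstrassCurve.Affine ℚ)
    (hW : W = { a₁ := 0, a₂ := 1 + u ^ 4, a₃ := 0, a₄ := u ^ 4, a₆ := 0 }) :
    ∃ h : W.Nonsingular (2 * u / (t + 1) ^ 2)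
        (4 * t * (t ^ 2 + 2 * t - 1) * (t ^ 2 + 1) / ((t + 1) ^ 5 * (t - 1) ^ 3)),
      addOrderOf (WeierstrassCurve.Affine.Point.some _ _ h) = 8 := by
  subst hW
  have hm : t - 1 ≠ 0 := sub_ne_zero.mpr ht1
  have hp : t + 1 ≠ 0 := fun h => htm1 (by linear_combination h)
  have hs : t ^ 2 - 1 ≠ 0 := by convert mul_ne_zero hm hp using 1; ring
  have hu0 : u ≠ 0 := hu ▸ div_ne_zero (mul_ne_zero two_ne_zero ht0) hs
  have hP : (twoTorsionModel (1 + u ^ 4) (u ^ 4)).Nonsingular _ _ :=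
    twoTorsionModel_nonsingular (family_point_equation hm hp hu)
      (mul_ne_zero two_ne_zero (family_point_y_ne_zero ht0 hm hp))
  have hyQ : 2 * -(u ^ 2 * (u ^ 2 + 1)) ≠ 0 :=
    mul_ne_zero two_ne_zero (neg_ne_zero.mpr (by positivity))
  have hQ : (twoTorsionModel (1 + u ^ 4) (u ^ 4)).Nonsingular (u ^ 2) (-(u ^ 2 * (u ^ 2 + 1))) :=
    twoTorsionModel_nonsingular (by ring) hyQ
  have hO := twoTorsionModel_nonsingular_zero (A := 1 + u ^ 4) (pow_ne_zero 4 hu0)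
  have h2P := family_two_nsmul ht0 hm hp hu hP hQ
  have h4P := twoTorsionModel_two_nsmul_eq_zero_zero (by ring) hQ hO hyQ (by ring)
  have h8P := twoTorsionModel_two_nsmul_zero hO
  refine ⟨hP, addOrderOf_eq_prime_pow (p := 2) (n := 2) ?_ ?_⟩
  · rw [show 2 ^ 2 = 2 * 2 from rfl, mul_nsmul, h2P, h4P]
    exact Point.some_ne_zero hO
  · rw [show 2 ^ (2 + 1) = 2 * 2 * 2 from rfl, mul_nsmul, mul_nsmul, h2P, h4P, h8P]
end

section
/- If a and b are coprime positive integers that are both odd with a < b, then setting a' = (b-a)/2 and b' = (a+b)/2, the integers a' and b' are coprime, of opposite parity, and satisfy max(a', b') < max(a, b). -/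
/-- If `a`, `b` are coprime positive odd integers with `a < b`, then `a' = (b-a)/2` and
`b' = (a+b)/2` are coprime, of opposite parity, and `max a' b' < max a b`. -/
theorem stmt_1 (a b : ℕ) (ha : 0 < a) (hab : a < b) (hcop : Nat.gcd a b = 1)
    (hoa : Odd a) (hob : Odd b) (a' b' : ℕ)
    (ha' : a' = (b - a) / 2) (hb' : b' = (a + b) / 2) :
    Nat.gcd a' b' = 1 ∧ ¬(Even a' ↔ Even b') ∧ max a' b' < max a b := by
  obtain ⟨m, hm⟩ := hoa
  obtain ⟨n, hn⟩ := hob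
  have ha'' : a' = n - m := by omega
  have hb'' : b' = m + n + 1 := by omega
  have hsum : a' + b' = b := by omega
  have hdiff : b' - a' = a := by omega
  have hgcd : Nat.gcd a' b' = 1 := by
    have d1 : Nat.gcd a' b' ∣ b := hsum ▸ Nat.dvd_add (Nat.gcd_dvd_left _ _) (Nat.gcd_dvd_right _ _)
    have d2 : Nat.gcd a' b' ∣ a := hdiff ▸ Nat.dvd_sub (Nat.gcd_dvd_right _ _) (Nat.gcd_dvd_left _ _)
    have := Nat.dvd_gcd d2 d1
    rw [hcop] at this
    exact Nat.eq_one_of_dvd_one this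
  refine ⟨hgcd, ?_, ?_⟩
  · simp only [Nat.even_iff]
    omega
  · omega
end

section
/- Let a, b be coprime integers of opposite parity with 0 < a < b. Then the seven integers a² - b² - 2ab, a² - b² + 2ab, a² + b², a, b, b - a, b + a are pairwise coprime. -/
private lemma shift_cop {u v w : ℤ} (h : IsCoprime u v) (c : ℤ) (hw : w = v + u * c) :
    IsCoprime u w := hw ▸ h.add_mul_left_right c

private lemma odd_cop_two {n : ℤ} (h : Odd n) : IsCoprime 2 n := by
  obtain ⟨k, hk⟩ := h
  exact ⟨-k, 1, by rw [hk]; ring⟩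

/-- For coprime integers `a`, `b` of opposite parity with `0 < a < b`, the seven integers
`a²-b²-2ab, a²+b²+2ab, a²+b², a, b, b-a, b+a` are pairwise coprime. -/
theorem stmt_3 (a b : ℤ) (hcop : IsCoprime a b) (hpar : ¬(Even a ↔ Even b))
    (ha : 0 < a) (hab : a < b) :
    List.Pairwise IsCoprime
      [a ^ 2 - b ^ 2 - 2 * a * b, a ^ 2 - b ^ 2 + 2 * a * b, a ^ 2 + b ^ 2,
        a, b, b - a, b + a] := by
  -- parity facts
  have hoddp : Odd (b + a) := by
    rw [Int.not_even_iff_odd.symm, Int.even_add]; tauto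
  have hoddm : Odd (b - a) := by
    rw [Int.not_even_iff_odd.symm, Int.even_sub]; tauto
  have heven : Even (2 * (a * b)) := ⟨a * b, by ring⟩
  have hoddX : Odd (a ^ 2 - b ^ 2 - 2 * a * b) := by
    have e2 : a ^ 2 - b ^ 2 - 2 * a * b = -((b + a) * (b - a)) - 2 * (a * b) := by ring
    rw [e2]
    exact ((hoddp.mul hoddm).neg).sub_even heven
  have hoddY : Odd (a ^ 2 - b ^ 2 + 2 * a * b) := by
    have e2 : a ^ 2 - b ^ 2 + 2 * a * b = -((b + a) * (b - a)) + 2 * (a * b) := by ring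
    rw [e2]
    exact ((hoddp.mul hoddm).neg).add_even heven
  have hoddZ : Odd (a ^ 2 + b ^ 2) := by
    have e2 : a ^ 2 + b ^ 2 = (b + a) * (b + a) - 2 * (a * b) := by ring
    rw [e2]
    exact (hoddp.mul hoddp).sub_even heven
  -- coprimality with a
  have hab2 : IsCoprime a (-(b ^ 2)) := (hcop.pow_right).neg_right
  have caX : IsCoprime a (a ^ 2 - b ^ 2 - 2 * a * b) := shift_cop hab2 (a - 2 * b) (by ring)
  have caY : IsCoprime a (a ^ 2 - b ^ 2 + 2 * a * b) := shift_cop hab2 (a + 2 * b) (by ring)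
  have caZ : IsCoprime a (a ^ 2 + b ^ 2) := shift_cop (hcop.pow_right (n := 2)) a (by ring)
  have cam : IsCoprime a (b - a) := shift_cop hcop (-1) (by ring)
  have cap : IsCoprime a (b + a) := shift_cop hcop 1 (by ring)
  -- coprimality with b
  have hba2 : IsCoprime b (a ^ 2) := hcop.symm.pow_right (n := 2)
  have cbX : IsCoprime b (a ^ 2 - b ^ 2 - 2 * a * b) := shift_cop hba2 (-b - 2 * a) (by ring)
  have cbY : IsCoprime b (a ^ 2 - b ^ 2 + 2 * a * b) := shift_cop hba2 (-b + 2 * a) (by ring)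
  have cbZ : IsCoprime b (a ^ 2 + b ^ 2) := shift_cop hba2 b (by ring)
  have cbm : IsCoprime b (b - a) := shift_cop hcop.symm.neg_right 1 (by ring)
  have cbp : IsCoprime b (b + a) := shift_cop hcop.symm 1 (by ring)
  -- coprime to 2
  have c2X : IsCoprime (a ^ 2 - b ^ 2 - 2 * a * b) 2 := (odd_cop_two hoddX).symm
  have c2Y : IsCoprime (a ^ 2 - b ^ 2 + 2 * a * b) 2 := (odd_cop_two hoddY).symm
  have c2m : IsCoprime (b - a) 2 := (odd_cop_two hoddm).symm
  have c2p : IsCoprime (b + a) 2 := (odd_cop_two hoddp).symm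
  -- cross pairs among the odd elements
  have cmp : IsCoprime (b - a) (b + a) :=
    shift_cop ((c2m.mul_right cam.symm)) 1 (by ring)
  have cXm : IsCoprime (b - a) (a ^ 2 - b ^ 2 - 2 * a * b) :=
    shift_cop ((c2m.mul_right (cbm.symm.pow_right (n := 2))).neg_right) (b - a) (by ring)
  have cXp : IsCoprime (b + a) (a ^ 2 - b ^ 2 - 2 * a * b) :=
    shift_cop (c2p.mul_right (cbp.symm.pow_right (n := 2))) (a - 3 * b) (by ring)
  have cYm : IsCoprime (b - a) (a ^ 2 - b ^ 2 + 2 * a * b) :=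
    shift_cop (c2m.mul_right (cbm.symm.pow_right (n := 2))) (-(a + 3 * b)) (by ring)
  have cYp : IsCoprime (b + a) (a ^ 2 - b ^ 2 + 2 * a * b) :=
    shift_cop ((c2p.mul_right (cbp.symm.pow_right (n := 2))).neg_right) (b + a) (by ring)
  have cZm : IsCoprime (b - a) (a ^ 2 + b ^ 2) :=
    shift_cop (c2m.mul_right (cbm.symm.pow_right (n := 2))) (-(a + b)) (by ring)
  have cZp : IsCoprime (b + a) (a ^ 2 + b ^ 2) :=
    shift_cop (c2p.mul_right (cbp.symm.pow_right (n := 2))) (a - b) (by ring)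
  have cXY : IsCoprime (a ^ 2 - b ^ 2 - 2 * a * b) (a ^ 2 - b ^ 2 + 2 * a * b) :=
    shift_cop (((c2X.mul_right c2X).mul_right (caX.symm.mul_right cbX.symm))) 1 (by ring)
  have cXZ : IsCoprime (a ^ 2 - b ^ 2 - 2 * a * b) (a ^ 2 + b ^ 2) :=
    shift_cop ((c2X.mul_right (cbX.symm.mul_right cXp.symm))) 1 (by ring)
  have cYZ : IsCoprime (a ^ 2 - b ^ 2 + 2 * a * b) (a ^ 2 + b ^ 2) :=
    shift_cop ((c2Y.mul_right (cbY.symm.mul_right cYm.symm))) 1 (by ring)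
  -- assemble
  refine List.Pairwise.cons ?_ (List.Pairwise.cons ?_ (List.Pairwise.cons ?_
    (List.Pairwise.cons ?_ (List.Pairwise.cons ?_ (List.Pairwise.cons ?_
    (List.Pairwise.cons ?_ List.Pairwise.nil)))))) <;>
  intro x hx <;> fin_cases hx <;>
    first
      | exact cXY | exact cXZ | exact caX.symm | exact cbX.symm | exact cXm.symm
      | exact cXp.symm | exact cYZ | exact caY.symm | exact cbY.symm | exact cYm.symm
      | exact cYp.symm | exact caZ.symm | exact cbZ.symm | exact cZm.symm | exact cZp.symm
      | exact hcop | exact cam | exact cap | exact cbm | exact cbp | exact cmp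
end

section
/- Let a, b be coprime integers of opposite parity with 0 < a < b, and set H = b (the parameter height). Then max(2ab, b² - a²) ∈ [2(√2 - 1)H², 2H(H-1)]; in particular 2(√2-1)H² ≤ max(2ab, b²-a²) ≤ 2H². -/
/-- For coprime integers `a`, `b` of opposite parity with `0 < a < b` and `H = b`,
we have `max(2ab, b²-a²) ∈ [2(√2-1)H², 2H(H-1)]`, and in particular
`2(√2-1)H² ≤ max(2ab, b²-a²) ≤ 2H²`. -/
theorem stmt_5 (a b : ℤ) (hcop : IsCoprime a b) (hpar : ¬(Even a ↔ Even b))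
    (ha : 0 < a) (hab : a < b) :
    (2 * (Real.sqrt 2 - 1) * (b : ℝ) ^ 2 ≤ (max (2 * a * b) (b ^ 2 - a ^ 2) : ℤ) ∧
      ((max (2 * a * b) (b ^ 2 - a ^ 2) : ℤ) : ℝ) ≤ 2 * (b : ℝ) * ((b : ℝ) - 1)) ∧
    2 * (Real.sqrt 2 - 1) * (b : ℝ) ^ 2 ≤ (max (2 * a * b) (b ^ 2 - a ^ 2) : ℤ) ∧
      ((max (2 * a * b) (b ^ 2 - a ^ 2) : ℤ) : ℝ) ≤ 2 * (b : ℝ) ^ 2 := by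
  have haR : (0 : ℝ) < (a : ℝ) := by exact_mod_cast ha
  have habR : (a : ℝ) < (b : ℝ) := by exact_mod_cast hab
  have hbR : (0 : ℝ) < (b : ℝ) := lt_trans haR habR
  have hs : Real.sqrt 2 ^ 2 = 2 := Real.sq_sqrt (by norm_num)
  have hs1 : 1 < Real.sqrt 2 := by
    nlinarith [Real.sqrt_nonneg 2]
  have hs2 : Real.sqrt 2 < 2 := by
    nlinarith [Real.sqrt_nonneg 2]
  have hab1 : (a : ℝ) + 1 ≤ (b : ℝ) := by
    have : a + 1 ≤ b := by omega
    exact_mod_cast this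
  have hb2 : (2 : ℝ) ≤ (b : ℝ) := by
    have : (2 : ℤ) ≤ b := by omega
    exact_mod_cast this
  -- lower bound
  have hlow : 2 * (Real.sqrt 2 - 1) * (b : ℝ) ^ 2 ≤
      ((max (2 * a * b) (b ^ 2 - a ^ 2) : ℤ) : ℝ) := by
    push_cast
    rcases le_or_gt ((Real.sqrt 2 - 1) * (b : ℝ)) (a : ℝ) with h | h
    · have h1 : 2 * (Real.sqrt 2 - 1) * (b : ℝ) ^ 2 ≤ 2 * (a : ℝ) * (b : ℝ) := by
        nlinarith
      exact h1.trans (le_max_left _ _)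
    · have h1 : 2 * (Real.sqrt 2 - 1) * (b : ℝ) ^ 2 ≤ (b : ℝ) ^ 2 - (a : ℝ) ^ 2 := by
        nlinarith
      exact h1.trans (le_max_right _ _)
  -- upper bound
  have hup : ((max (2 * a * b) (b ^ 2 - a ^ 2) : ℤ) : ℝ) ≤ 2 * (b : ℝ) * ((b : ℝ) - 1) := by
    push_cast
    apply max_le
    · nlinarith
    · nlinarith
  have hup2 : ((max (2 * a * b) (b ^ 2 - a ^ 2) : ℤ) : ℝ) ≤ 2 * (b : ℝ) ^ 2 := by
    refine hup.trans ?_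
    nlinarith
  exact ⟨⟨hlow, hup⟩, hlow, hup2⟩
end

section
/- Let S, T be coprime integers with S even and T odd. There is no prime p such that p⁴ divides A = 27(S⁸ - S⁴T⁴ + T⁸) and p⁶ divides B = 27(S⁴ - 2T⁴)(2S⁴ - T⁴)(S⁴ + T⁴). -/
/-- For coprime integers `S`, `T` with `S` even and `T` odd, there is no prime `p` with
`p⁴ ∣ A = 27(S⁸ - S⁴T⁴ + T⁸)` and `p⁶ ∣ B = 27(S⁴-2T⁴)(2S⁴-T⁴)(S⁴+T⁴)`. -/
theorem stmt_11 (S T : ℤ) (hcop : IsCoprime S T) (hS : Even S) (hT : Odd T)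
    (hne : S * T * (T ^ 4 - S ^ 4) ≠ 0)
    (A B : ℤ) (hA : A = 27 * (S ^ 8 - S ^ 4 * T ^ 4 + T ^ 8))
    (hB : B = 27 * (S ^ 4 - 2 * T ^ 4) * (2 * S ^ 4 - T ^ 4) * (S ^ 4 + T ^ 4)) :
    ¬∃ p : ℕ, p.Prime ∧ (p : ℤ) ^ 4 ∣ A ∧ (p : ℤ) ^ 6 ∣ B := by
  rintro ⟨p, hp, h4, h6⟩
  have hq : Prime (p : ℤ) := Int.prime_iff_natAbs_prime.mpr (by simpa using hp)
  set u : ℤ := S ^ 4 with hu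
  set v : ℤ := T ^ 4 with hv
  have hX : A = 27 * (u ^ 2 - u * v + v ^ 2) := by rw [hA, hu, hv]; ring
  have hBf : B = 27 * ((u - 2 * v) * ((2 * u - v) * (u + v))) := by
    rw [hB, hu, hv]; ring
  -- final contradiction helper
  have final : (p : ℤ) ∣ S → (p : ℤ) ∣ T → False := by
    intro h1 h2
    have := hcop.isUnit_of_dvd' h1 h2
    rw [Int.isUnit_iff] at this
    have h2le := hp.two_le
    rcases this with h | h <;> [skip; omega] <;>
      · have : p = 1 := by exact_mod_cast h
        omega
  have fin2 : (p : ℤ) ∣ u → (p : ℤ) ∣ v → False := fun h1 h2 =>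
    final (hq.dvd_of_dvd_pow h1) (hq.dvd_of_dvd_pow h2)
  -- p ≠ 2
  have hp2 : p ≠ 2 := by
    intro h
    subst h
    have h2A : (2 : ℤ) ∣ A := by
      have : ((2 : ℕ) : ℤ) ∣ ((2 : ℕ) : ℤ) ^ 4 := dvd_pow_self _ (by norm_num)
      exact_mod_cast this.trans h4
    have heu : Even u := by rw [hu]; exact hS.pow_of_ne_zero (by norm_num)
    have hov : Odd v := by rw [hv]; exact hT.pow
    obtain ⟨a, ha⟩ := heu
    obtain ⟨b, hb⟩ := hov
    have hoddA : Odd A := by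
      rw [hX, ha, hb]
      exact ⟨27 * (2*a^2 - 2*a*b - a + 2*b^2 + 2*b) + 13, by ring⟩
    exact (Int.not_odd_iff_even.mpr ((even_iff_two_dvd).mpr h2A)) hoddA
  -- p ≠ 3
  have hp3 : p ≠ 3 := by
    intro h
    subst h
    have h3 : (3 : ℤ) ∣ (u ^ 2 - u * v + v ^ 2) := by
      have h4' : (27 : ℤ) * 3 ∣ 27 * (u ^ 2 - u * v + v ^ 2) := by
        have he : (27 : ℤ) * 3 = ((3 : ℕ) : ℤ) ^ 4 := by norm_num
        rw [he, ← hX]; exact h4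
      exact (mul_dvd_mul_iff_left (by norm_num : (27 : ℤ) ≠ 0)).mp h4'
    have hz : (((S : ZMod 3)) ^ 4) ^ 2 - (S : ZMod 3) ^ 4 * (T : ZMod 3) ^ 4
        + ((T : ZMod 3) ^ 4) ^ 2 = 0 := by
      have := (ZMod.intCast_zmod_eq_zero_iff_dvd _ 3).mpr h3
      push_cast [hu, hv] at this
      linear_combination this
    have key : ∀ s t : ZMod 3,
        (s ^ 4) ^ 2 - s ^ 4 * t ^ 4 + (t ^ 4) ^ 2 = 0 → s = 0 ∧ t = 0 := by decide
    obtain ⟨hs0, ht0⟩ := key _ _ hz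
    have hdS : (3 : ℤ) ∣ S := by
      have := (ZMod.intCast_zmod_eq_zero_iff_dvd S 3).mp hs0
      exact_mod_cast this
    have hdT : (3 : ℤ) ∣ T := by
      have := (ZMod.intCast_zmod_eq_zero_iff_dvd T 3).mp ht0
      exact_mod_cast this
    have := hcop.isUnit_of_dvd' hdS hdT
    rw [Int.isUnit_iff] at this
    omega
  -- general case
  have hq3 : ¬ (p : ℤ) ∣ 3 := by
    intro h
    have : p ∣ 3 := by exact_mod_cast h
    exact hp3 ((Nat.prime_dvd_prime_iff_eq hp (by norm_num)).mp this)
  have hqX : (p : ℤ) ∣ u ^ 2 - u * v + v ^ 2 := by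
    have h1 : (p : ℤ) ∣ 27 * (u ^ 2 - u * v + v ^ 2) :=
      (dvd_pow_self _ (by norm_num : (4:ℕ) ≠ 0)).trans (hX ▸ h4)
    rcases hq.dvd_mul.mp h1 with h | h
    · exact absurd (hq.dvd_of_dvd_pow (show (p:ℤ) ∣ 3 ^ 3 by norm_num [h])) hq3
    · exact h
  have hqB : (p : ℤ) ∣ (u - 2 * v) * ((2 * u - v) * (u + v)) := by
    have h1 : (p : ℤ) ∣ 27 * ((u - 2 * v) * ((2 * u - v) * (u + v))) :=
      (dvd_pow_self _ (by norm_num : (6:ℕ) ≠ 0)).trans (hBf ▸ h6)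
    rcases hq.dvd_mul.mp h1 with h | h
    · exact absurd (hq.dvd_of_dvd_pow (show (p:ℤ) ∣ 3 ^ 3 by norm_num [h])) hq3
    · exact h
  have not3 : ∀ w : ℤ, (p : ℤ) ∣ 3 * w → (p : ℤ) ∣ w := by
    intro w hw
    rcases hq.dvd_mul.mp hw with h | h
    · exact absurd h hq3
    · exact h
  rcases hq.dvd_mul.mp hqB with h | h
  · -- p ∣ u - 2v, so p ∣ 3 v^2
    have hv2 : (p : ℤ) ∣ 3 * v ^ 2 := by
      have : 3 * v ^ 2 = (u ^ 2 - u * v + v ^ 2) - (u - 2 * v) * (u + v) := by ring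
      rw [this]
      exact dvd_sub hqX (h.mul_right _)
    have hdv : (p : ℤ) ∣ v := hq.dvd_of_dvd_pow (not3 _ hv2)
    have hdu : (p : ℤ) ∣ u := by
      have : u = (u - 2 * v) + 2 * v := by ring
      rw [this]
      exact dvd_add h (hdv.mul_left 2)
    exact fin2 hdu hdv
  rcases hq.dvd_mul.mp h with h | h
  · -- p ∣ 2u - v, so p ∣ 3 u^2
    have hu2 : (p : ℤ) ∣ 3 * u ^ 2 := by
      have : 3 * u ^ 2 = (u ^ 2 - u * v + v ^ 2) + (2 * u - v) * (v + u) := by ring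
      rw [this]
      exact dvd_add hqX (h.mul_right _)
    have hdu : (p : ℤ) ∣ u := hq.dvd_of_dvd_pow (not3 _ hu2)
    have hdv : (p : ℤ) ∣ v := by
      have : v = 2 * u - (2 * u - v) := by ring
      rw [this]
      exact dvd_sub (hdu.mul_left 2) h
    exact fin2 hdu hdv
  · -- p ∣ u + v, so p ∣ 3 u v
    have huv : (p : ℤ) ∣ 3 * (u * v) := by
      have : 3 * (u * v) = (u + v) ^ 2 - (u ^ 2 - u * v + v ^ 2) := by ring
      rw [this]
      exact dvd_sub (dvd_pow h (by norm_num)) hqX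
    rcases hq.dvd_mul.mp (not3 _ huv) with h' | h'
    · exact fin2 h' (by
        have : v = (u + v) - u := by ring
        rw [this]; exact dvd_sub h h')
    · exact fin2 (by
        have : u = (u + v) - v := by ring
        rw [this]; exact dvd_sub h h') h'
end

section
/- Let p be an odd prime and v ≥ 1. The number of pairs (α, β) with 0 ≤ α, β < p^v, not both divisible by p, satisfying (α² - β² - 2αβ)(α² - β² + 2αβ) ≡ 0 (mod p^v) is 4φ(p^v) if 2 is a quadratic residue modulo p, and 0 otherwise. -/
/-!
For `β` prime to `p`, the condition says that `α / β` is a root of `t⁴ - 6t² + 1` in `ℤ/p^v`,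
while `p ∣ β` forces `p ∣ α`; so the count is `φ(p^v)` times the number of roots. Modulo `p`, a
root `t` makes `(t - 1)²` or `(t + 1)²` equal to `2`. Conversely, Hensel's lemma lifts a square
root of `2` modulo `p` to `s` with `s² = 2` in `ℤ/p^v`, and then
`t⁴ - 6t² + 1 = (t² - (1 + s)²)(t² - (1 - s)²)`. In the local ring `ℤ/p^v` a product of two
factors whose difference is a unit vanishes only if one of them does; here the differences `4s`
and `2(1 ± s)` are units (as `(1 + s)(s - 1) = s² - 1 = 1`), so the roots are exactly the four
distinct elements `±(1 ± s)`.
-/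

open scoped Classical

open Finset IsLocalRing Polynomial

theorem IsLocalRing.eq_zero_or_eq_zero_of_mul_eq_zero {R : Type*} [CommRing R] [IsLocalRing R]
    {x y : R} (hxy : IsUnit (x - y)) (h : x * y = 0) : x = 0 ∨ y = 0 := by
  rw [sub_eq_add_neg] at hxy
  rcases isUnit_or_isUnit_of_isUnit_add hxy with hx | hy
  · exact Or.inr (hx.mul_right_eq_zero.1 h)
  · exact Or.inl (((IsUnit.neg_iff y).1 hy).mul_left_eq_zero.1 h)

theorem IsLocalRing.sq_eq_sq_iff_eq_or_eq_neg {R : Type*} [CommRing R] [IsLocalRing R]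
    {a t : R} (ha : IsUnit (2 * a)) : t ^ 2 = a ^ 2 ↔ t = a ∨ t = -a := by
  refine ⟨fun h => ?_, by rintro (rfl | rfl) <;> ring⟩
  have := eq_zero_or_eq_zero_of_mul_eq_zero (x := t - a) (y := t + a)
    (by convert ha.neg using 1; ring) (by linear_combination h)
  rwa [sub_eq_zero, add_eq_zero_iff_eq_neg] at this

theorem IsLocalRing.card_filter_sq_eq_sq {R : Type*} [CommRing R] [IsLocalRing R] [Fintype R]
    [DecidableEq R] {a : R} (ha : IsUnit (2 * a)) : #{t | t ^ 2 = a ^ 2} = 2 := by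
  have : ({t | t ^ 2 = a ^ 2} : Finset R) = {a, -a} := by
    ext t
    simp [sq_eq_sq_iff_eq_or_eq_neg ha]
  rw [this, card_pair_eq_two_iff]
  exact fun h => ha.ne_zero (by linear_combination h)

theorem ZMod.isLocalRing_prime_pow {p : ℕ} [Fact p.Prime] {v : ℕ} (hv : v ≠ 0) :
    IsLocalRing (ZMod (p ^ v)) :=
  haveI : Nontrivial (ZMod (p ^ v)) :=
    ZMod.nontrivial_iff.2 (Nat.one_lt_pow hv (Fact.out : p.Prime).one_lt).ne'
  .of_surjective' (PadicInt.toZModPow v) (ZMod.ringHom_surjective _)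

theorem PadicInt.isSquare_of_isSquare_toZMod {p : ℕ} [Fact p.Prime] (hp : p ≠ 2) {x : ℤ_[p]}
    (hx : IsUnit x) (h : IsSquare (toZMod x)) : IsSquare x := by
  obtain ⟨r, hr⟩ := h
  obtain ⟨a₀, rfl⟩ := ZMod.ringHom_surjective toZMod r
  have hmem (y : ℤ_[p]) : y ∈ maximalIdeal ℤ_[p] ↔ toZMod y = 0 := by
    rw [← ker_toZMod, RingHom.mem_ker]
  have hr0 : toZMod a₀ ≠ 0 := fun h0 => (hx.map toZMod).ne_zero (by rw [hr, h0, mul_zero])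
  have h2 : (2 : ZMod p) ≠ 0 := Ring.two_ne_zero (by rwa [ZMod.ringChar_zmod_n])
  have hderiv : IsUnit (2 * a₀) :=
    notMem_maximalIdeal.1 (by simpa [hmem, map_ofNat] using And.intro h2 hr0)
  obtain ⟨a, ha, -⟩ := HenselianRing.is_henselian (I := maximalIdeal ℤ_[p]) (X ^ 2 - C x)
    (monic_X_pow_sub_C x two_ne_zero) a₀ (by simp [hmem, hr, sq])
    (by simpa [one_add_one_eq_two] using hderiv.map (Ideal.Quotient.mk (maximalIdeal ℤ_[p])))
  exact ⟨a, by simpa [sq, sub_eq_zero, eq_comm] using ha⟩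

theorem ZMod.isSquare_intCast_prime_pow {p : ℕ} [Fact p.Prime] (hp : p ≠ 2) {a : ℤ}
    (ha : (a : ZMod p) ≠ 0) (h : IsSquare (a : ZMod p)) (v : ℕ) : IsSquare (a : ZMod (p ^ v)) := by
  have hunit : IsUnit (a : ℤ_[p]) := by
    rw [← notMem_maximalIdeal, ← PadicInt.ker_toZMod, RingHom.mem_ker, map_intCast]
    exact ha
  obtain ⟨z, hz⟩ := PadicInt.isSquare_of_isSquare_toZMod hp hunit (by rwa [map_intCast])
  exact ⟨PadicInt.toZModPow v z, by rw [← map_mul, ← hz, map_intCast]⟩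

theorem ZMod.card_filter_range_prod {n : ℕ} [NeZero n] (P : ZMod n × ZMod n → Prop)
    [DecidablePred P] :
    #((range n ×ˢ range n).filter fun x => P ((x.1 : ZMod n), (x.2 : ZMod n))) = #{x | P x} := by
  refine card_nbij' (fun x => ((x.1 : ZMod n), (x.2 : ZMod n))) (fun y => (y.1.val, y.2.val))
    ?_ ?_ ?_ ?_
  · intro x hx
    simpa using (mem_filter.1 hx).2
  · intro y hy
    simpa [ZMod.val_lt] using hy
  · rintro ⟨a, b⟩ hx
    simp only [coe_filter, mem_product, mem_range, Set.mem_ofPred_eq] at hx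
    simp [ZMod.val_cast_of_lt hx.1.1, ZMod.val_cast_of_lt hx.1.2]
  · intro y _
    simp

section QuarticForm

variable {R : Type*} [CommRing R]

def quarticForm (a b : R) : R := (a ^ 2 - b ^ 2 - 2 * a * b) * (a ^ 2 - b ^ 2 + 2 * a * b)

theorem map_quarticForm {S : Type*} [CommRing S] (f : R →+* S) (a b : R) :
    f (quarticForm a b) = quarticForm (f a) (f b) := by
  simp [quarticForm, map_ofNat]

theorem quarticForm_mul_right (t u : R) : quarticForm (t * u) u = u ^ 4 * quarticForm t 1 := by
  unfold quarticForm; ring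

theorem IsUnit.of_quarticForm_eq_zero {a b : R} (h : quarticForm a b = 0) (ha : IsUnit a) :
    IsUnit b := by
  have : a ^ 4 = b * (6 * a ^ 2 * b - b ^ 3) := by
    unfold quarticForm at h; linear_combination h
  exact isUnit_of_mul_isUnit_left (this ▸ ha.pow 4)

theorem isSquare_two_of_quarticForm_eq_zero [IsDomain R] {t : R} (h : quarticForm t 1 = 0) :
    IsSquare (2 : R) := by
  have : ((t - 1) ^ 2 - 2) * ((t + 1) ^ 2 - 2) = 0 := by
    unfold quarticForm at h; linear_combination h
  rcases mul_eq_zero.1 this with h | h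
  · exact ⟨t - 1, by linear_combination -h⟩
  · exact ⟨t + 1, by linear_combination -h⟩

variable [Fintype R] [DecidableEq R]

theorem card_filter_quarticForm_eq_zero :
    #{x : R × R | (IsUnit x.1 ∨ IsUnit x.2) ∧ quarticForm x.1 x.2 = 0} =
      Fintype.card Rˣ * #{t : R | quarticForm t 1 = 0} := by
  rw [← card_univ, ← card_product]
  symm
  refine card_bij (fun x _ => (x.2 * x.1, (x.1 : R))) ?_ ?_ ?_
  · rintro ⟨u, t⟩ h
    simp_all [quarticForm_mul_right]
  · rintro ⟨u, t⟩ - ⟨u', t'⟩ - h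
    simp only [Prod.mk.injEq] at h
    obtain rfl := Units.ext h.2
    simpa using h.1
  · rintro ⟨a, b⟩ h
    simp only [mem_filter, mem_univ, true_and] at h
    obtain ⟨u, rfl⟩ : IsUnit b := h.1.elim (IsUnit.of_quarticForm_eq_zero h.2) id
    have h0 : quarticForm (a * ↑u⁻¹) 1 = 0 := by
      rw [← (u.isUnit.pow 4).mul_right_eq_zero, ← quarticForm_mul_right]
      simpa using h.2
    exact ⟨(u, a * ↑u⁻¹), by simpa using h0, by simp⟩

theorem card_filter_quarticForm_one_eq_zero [IsLocalRing R] (h2 : IsUnit (2 : R)) {s : R}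
    (hs : s ^ 2 = 2) : #{t : R | quarticForm t 1 = 0} = 4 := by
  have hs' : IsUnit s := (isUnit_pow_iff two_ne_zero).1 (hs ▸ h2)
  have hplus : IsUnit (2 * (1 + s)) := h2.mul (.of_mul_eq_one (s - 1) (by linear_combination hs))
  have hminus : IsUnit (2 * (1 - s)) := h2.mul (.of_mul_eq_one (-1 - s) (by linear_combination hs))
  have hdiff : IsUnit ((1 - s) ^ 2 - (1 + s) ^ 2) := by
    convert ((h2.pow 2).mul hs').neg using 1; ring
  have hfactor (t : R) : quarticForm t 1 = (t ^ 2 - (1 + s) ^ 2) * (t ^ 2 - (1 - s) ^ 2) := by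
    unfold quarticForm; linear_combination (2 * t ^ 2 - s ^ 2) * hs
  have hsplit : (univ.filter fun t : R => quarticForm t 1 = 0) =
      univ.filter (fun t => t ^ 2 = (1 + s) ^ 2) ∪ univ.filter (fun t => t ^ 2 = (1 - s) ^ 2) := by
    rw [← filter_or]
    refine filter_congr fun t _ => ?_
    rw [hfactor, ← sub_eq_zero (b := (1 + s) ^ 2), ← sub_eq_zero (b := (1 - s) ^ 2)]
    refine ⟨eq_zero_or_eq_zero_of_mul_eq_zero (by convert hdiff using 1; ring), ?_⟩
    rintro (h | h) <;> simp [h]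
  rw [hsplit, card_union_of_disjoint, card_filter_sq_eq_sq hplus, card_filter_sq_eq_sq hminus]
  exact disjoint_filter.2 fun t _ h1 h2 => hdiff.ne_zero (by rw [← h1, ← h2, sub_self])

end QuarticForm

theorem ZMod.card_filter_quarticForm_one_eq_zero_of_isSquare {p : ℕ} [Fact p.Prime] (hp : p ≠ 2) {v : ℕ}
    (hv : v ≠ 0) (hsq : IsSquare (2 : ZMod p)) : #{t : ZMod (p ^ v) | quarticForm t 1 = 0} = 4 := by
  have := ZMod.isLocalRing_prime_pow (p := p) hv
  have h2 : ((2 : ℤ) : ZMod p) ≠ 0 := by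
    simpa using Ring.two_ne_zero (by rwa [ZMod.ringChar_zmod_n])
  obtain ⟨s, hs⟩ := ZMod.isSquare_intCast_prime_pow hp h2 (by simpa using hsq) v
  have h2unit : IsUnit (2 : ZMod (p ^ v)) := by
    simpa using (ZMod.isUnit_natCast_iff_not_dvd_pow Fact.out (Nat.pos_of_ne_zero hv)).2
      fun h => hp ((Nat.prime_dvd_prime_iff_eq Fact.out Nat.prime_two).1 h)
  exact card_filter_quarticForm_one_eq_zero h2unit (s := s) (by simpa [sq] using hs.symm)

theorem ZMod.quarticForm_one_ne_zero {p : ℕ} [Fact p.Prime] {v : ℕ} (hv : v ≠ 0)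
    (hsq : ¬IsSquare (2 : ZMod p)) (t : ZMod (p ^ v)) : quarticForm t 1 ≠ 0 := fun ht => hsq <| by
  let f := ZMod.castHom (dvd_pow_self p hv) (ZMod p)
  refine isSquare_two_of_quarticForm_eq_zero (t := f t) ?_
  rw [← map_one f, ← map_quarticForm, ht, map_zero]

/-- For an odd prime `p` and `v ≥ 1`, the number of pairs `(α,β)` with `0 ≤ α, β < p^v`,
not both divisible by `p`, with `p^v ∣ (α²-β²-2αβ)(α²-β²+2αβ)` is `4φ(p^v)` if `2` is a
square mod `p`, and `0` otherwise. -/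
theorem stmt_12 (p : ℕ) (hp : p.Prime) (hodd : Odd p) (v : ℕ) (hv : 1 ≤ v) :
    ((Finset.range (p ^ v) ×ˢ Finset.range (p ^ v)).filter fun x =>
        ¬(p ∣ x.1 ∧ p ∣ x.2) ∧
          (p : ℤ) ^ v ∣ ((x.1 : ℤ) ^ 2 - (x.2 : ℤ) ^ 2 - 2 * x.1 * x.2) *
            ((x.1 : ℤ) ^ 2 - (x.2 : ℤ) ^ 2 + 2 * x.1 * x.2)).card =
      if IsSquare (2 : ZMod p) then 4 * Nat.totient (p ^ v) else 0 := by
  have := Fact.mk hp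
  have hv0 : v ≠ 0 := by omega
  have hunit (a : ℕ) : IsUnit (a : ZMod (p ^ v)) ↔ ¬p ∣ a :=
    ZMod.isUnit_natCast_iff_not_dvd_pow hp (by omega)
  have hdvd (E : ℤ) : (p : ℤ) ^ v ∣ E ↔ (E : ZMod (p ^ v)) = 0 := by
    rw [ZMod.intCast_zmod_eq_zero_iff_dvd, Nat.cast_pow]
  calc _ = #((range (p ^ v) ×ˢ range (p ^ v)).filter fun x =>
        (IsUnit (x.1 : ZMod (p ^ v)) ∨ IsUnit (x.2 : ZMod (p ^ v))) ∧
          quarticForm (x.1 : ZMod (p ^ v)) x.2 = 0) := by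
        refine congrArg card (filter_congr fun x _ => ?_)
        rw [hunit, hunit, hdvd, not_and_or, quarticForm]
        push_cast
        rfl
    _ = #{x : ZMod (p ^ v) × ZMod (p ^ v) | (IsUnit x.1 ∨ IsUnit x.2) ∧ quarticForm x.1 x.2 = 0} :=
        ZMod.card_filter_range_prod fun x => (IsUnit x.1 ∨ IsUnit x.2) ∧ quarticForm x.1 x.2 = 0
    _ = Nat.totient (p ^ v) * #{t : ZMod (p ^ v) | quarticForm t 1 = 0} := by
        rw [card_filter_quarticForm_eq_zero, ZMod.card_units_eq_totient]
    _ = _ := by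
        split_ifs with hsq
        · rw [ZMod.card_filter_quarticForm_one_eq_zero_of_isSquare (hodd.ne_two_of_dvd_nat dvd_rfl) hv0 hsq,
            mul_comm]
        · rw [filter_false_of_mem fun t _ => ZMod.quarticForm_one_ne_zero hv0 hsq t, card_empty,
            mul_zero]
end

section
/- Let p be an odd prime and v ≥ 1. The number of pairs (α, β) with 0 ≤ α, β < p^v, not both divisible by p, satisfying αβ(β - α)(β + α) ≡ 0 (mod p^v) equals 4φ(p^v). -/
open Finset
lemma cancel_aux {p : ℕ} (hp : p.Prime) {v : ℕ} {x y : ℤ}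
    (hx : ¬ (p:ℤ) ∣ x) (h : (p:ℤ)^v ∣ x * y) : (p:ℤ)^v ∣ y := by
  have hpp : Prime (p:ℤ) := Int.prime_iff_natAbs_prime.2 (by simpa using hp)
  have hc : IsCoprime ((p:ℤ)^v) x := (hpp.coprime_iff_not_dvd.2 hx).pow_left
  exact hc.dvd_of_dvd_mul_left h

lemma key {p : ℕ} (hp : p.Prime) (hodd : Odd p) {v : ℕ} {a b : ℤ}
    (h : ¬ ((p:ℤ) ∣ a ∧ (p:ℤ) ∣ b)) :
    ((p:ℤ)^v ∣ a * b * (b - a) * (b + a)) ↔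
      (p:ℤ)^v ∣ a ∨ (p:ℤ)^v ∣ b ∨ (p:ℤ)^v ∣ (b - a) ∨ (p:ℤ)^v ∣ (b + a) := by
  have hpp : Prime (p:ℤ) := Int.prime_iff_natAbs_prime.2 (by simpa using hp)
  have hp2 : ¬ (p:ℤ) ∣ 2 := by
    intro hd
    have : p ∣ 2 := by exact_mod_cast hd
    have := (Nat.prime_dvd_prime_iff_eq hp Nat.prime_two).1 this
    rw [this] at hodd
    exact (Nat.not_odd_iff_even.2 (by norm_num)) hodd
  constructor
  · intro H
    by_cases ha : (p:ℤ) ∣ a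
    · have hb : ¬ (p:ℤ) ∣ b := fun hb => h ⟨ha, hb⟩
      have h1 : ¬ (p:ℤ) ∣ (b - a) := fun hd => hb (by simpa using dvd_add hd ha)
      have h2 : ¬ (p:ℤ) ∣ (b + a) := fun hd => hb (by simpa using dvd_sub hd ha)
      left
      have H1 : (p:ℤ)^v ∣ b * ((b - a) * ((b + a) * a)) := by
        rwa [show b * ((b - a) * ((b + a) * a)) = a * b * (b - a) * (b + a) by ring]
      exact cancel_aux hp h2 (cancel_aux hp h1 (cancel_aux hp hb H1))
    · have H1 : (p:ℤ)^v ∣ b * ((b - a) * (b + a)) :=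
        cancel_aux hp ha (by rwa [show a * (b * ((b - a) * (b + a))) = a * b * (b - a) * (b + a) by ring])
      by_cases hb : (p:ℤ) ∣ b
      · have h1 : ¬ (p:ℤ) ∣ (b - a) := fun hd => ha (by simpa using dvd_sub hb hd)
        have h2 : ¬ (p:ℤ) ∣ (b + a) := fun hd => ha (by simpa using dvd_sub hd hb)
        right; left
        have H2 : (p:ℤ)^v ∣ (b - a) * ((b + a) * b) := by
          rwa [show (b - a) * ((b + a) * b) = b * ((b - a) * (b + a)) by ring]
        exact cancel_aux hp h2 (cancel_aux hp h1 H2)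
      · have H2 : (p:ℤ)^v ∣ (b - a) * (b + a) := cancel_aux hp hb H1
        by_cases h1 : (p:ℤ) ∣ (b - a)
        · have h2 : ¬ (p:ℤ) ∣ (b + a) := by
            intro hd
            have : (p:ℤ) ∣ 2 * b := by
              have := dvd_add hd h1
              rwa [show b + a + (b - a) = 2 * b by ring] at this
            rcases hpp.dvd_mul.1 this with h' | h'
            · exact hp2 h'
            · exact hb h'
          right; right; left
          exact cancel_aux hp h2 (by rwa [mul_comm] at H2)
        · right; right; right
          exact cancel_aux hp h1 H2
  · rintro (h' | h' | h' | h')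
    · exact ((h'.mul_right b).mul_right _).mul_right _
    · exact ((h'.mul_left a).mul_right _).mul_right _
    · exact ((h'.mul_left (a * b))).mul_right _
    · exact h'.mul_left (a * b * (b - a))

/-- For an odd prime `p` and `v ≥ 1`, the number of pairs `(α,β)` with `0 ≤ α, β < p^v`,
not both divisible by `p`, with `p^v ∣ αβ(β-α)(β+α)` equals `4φ(p^v)`. -/
theorem stmt_14 (p : ℕ) (hp : p.Prime) (hodd : Odd p) (v : ℕ) (hv : 1 ≤ v) :
    ((Finset.range (p ^ v) ×ˢ Finset.range (p ^ v)).filter fun x =>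
        ¬(p ∣ x.1 ∧ p ∣ x.2) ∧
          (p : ℤ) ^ v ∣ (x.1 : ℤ) * (x.2 : ℤ) * ((x.2 : ℤ) - (x.1 : ℤ)) *
            ((x.2 : ℤ) + (x.1 : ℤ))).card = 4 * Nat.totient (p ^ v) := by
  set n := p ^ v with hn
  have hn0 : 0 < n := pow_pos hp.pos v
  have hpn : p ∣ n := dvd_pow_self p (by omega)
  set U : Finset ℕ := (range n).filter (fun a => ¬ p ∣ a) with hU
  -- card U = totient n
  have hUcard : U.card = Nat.totient n := by
    rw [Nat.totient]
    congr 1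
    apply Finset.filter_congr
    intro a _
    rw [hn, Nat.coprime_pow_left_iff (show 0 < v by omega)]
    exact hp.coprime_iff_not_dvd.symm
  set S0 := U.image (fun b => ((0 : ℕ), b)) with hS0
  set S1 := U.image (fun a => (a, (0 : ℕ))) with hS1
  set S2 := U.image (fun a => (a, a)) with hS2
  set S3 := U.image (fun a => (a, n - a)) with hS3
  have hmemU : ∀ a, a ∈ U ↔ a < n ∧ ¬ p ∣ a := by
    intro a; simp [hU]
  have hcast : ((n : ℕ) : ℤ) = (p:ℤ)^v := by push_cast [hn]; ring
  have hset : ((range n ×ˢ range n).filter fun x =>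
        ¬(p ∣ x.1 ∧ p ∣ x.2) ∧
          (p : ℤ) ^ v ∣ (x.1 : ℤ) * (x.2 : ℤ) * ((x.2 : ℤ) - (x.1 : ℤ)) *
            ((x.2 : ℤ) + (x.1 : ℤ))) = ((S0 ∪ S1) ∪ S2) ∪ S3 := by
    ext ⟨a, b⟩
    simp only [mem_filter, mem_product, mem_range, mem_union, hS0, hS1, hS2, hS3,
      mem_image, hmemU, Prod.mk.injEq]
    constructor
    · rintro ⟨⟨ha, hb⟩, hnd, hdvd⟩
      have hnd' : ¬ ((p:ℤ) ∣ (a:ℤ) ∧ (p:ℤ) ∣ (b:ℤ)) := by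
        simpa [Int.natCast_dvd_natCast] using hnd
      rcases (key hp hodd hnd').1 hdvd with h' | h' | h' | h'
      · have hna : n ∣ a := by rw [← Int.natCast_dvd_natCast]; push_cast; rwa [hcast]
        have ha0 : a = 0 := Nat.eq_zero_of_dvd_of_lt hna ha
        have hpb : ¬ p ∣ b := fun hd => hnd ⟨ha0 ▸ dvd_zero p, hd⟩
        exact Or.inl (Or.inl (Or.inl ⟨b, ⟨hb, hpb⟩, ha0.symm, rfl⟩))
      · have hnb : n ∣ b := by rw [← Int.natCast_dvd_natCast]; push_cast; rwa [hcast]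
        have hb0 : b = 0 := Nat.eq_zero_of_dvd_of_lt hnb hb
        have hpa : ¬ p ∣ a := fun hd => hnd ⟨hd, hb0 ▸ dvd_zero p⟩
        exact Or.inl (Or.inl (Or.inr ⟨a, ⟨ha, hpa⟩, rfl, hb0.symm⟩))
      · have hab : a = b := by
          rw [← hcast] at h'
          obtain ⟨k, hk⟩ := h'
          rcases lt_trichotomy k 0 with hk0 | hk0 | hk0
          · nlinarith [hk, (show (b:ℤ) < n by exact_mod_cast hb),
              (show (0:ℤ) ≤ (a:ℤ) by positivity), (show (0:ℤ) < (n:ℤ) by exact_mod_cast hn0),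
              mul_le_mul_of_nonneg_left (show k ≤ -1 by omega) (le_of_lt (show (0:ℤ) < (n:ℤ) by exact_mod_cast hn0))]
          · have : (b:ℤ) - a = 0 := by rw [hk, hk0, mul_zero]
            exact_mod_cast (by omega : (a:ℤ) = b)
          · nlinarith [hk, (show (a:ℤ) < n by exact_mod_cast ha),
              (show (0:ℤ) ≤ (b:ℤ) by positivity), (show (0:ℤ) < (n:ℤ) by exact_mod_cast hn0),
              mul_le_mul_of_nonneg_left (show 1 ≤ k by omega) (le_of_lt (show (0:ℤ) < (n:ℤ) by exact_mod_cast hn0))]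
        have hpa : ¬ p ∣ a := fun hd => hnd ⟨hd, hab ▸ hd⟩
        exact Or.inl (Or.inr ⟨a, ⟨ha, hpa⟩, rfl, hab⟩)
      · have hnab : n ∣ b + a := by
          rw [← Int.natCast_dvd_natCast]; push_cast; rwa [hcast]
        obtain ⟨k, hk⟩ := hnab
        have hk2 : k < 2 := by
          by_contra hcon
          have : n * 2 ≤ n * k := Nat.mul_le_mul_left n (by omega)
          omega
        interval_cases k
        · exfalso
          have ha0 : a = 0 := by omega
          have hb0 : b = 0 := by omega
          exact hnd ⟨ha0 ▸ dvd_zero p, hb0 ▸ dvd_zero p⟩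
        · have hpa : ¬ p ∣ a := by
            intro hd
            exact hnd ⟨hd, (show b = n - a by omega) ▸ Nat.dvd_sub hpn hd⟩
          exact Or.inr ⟨a, ⟨ha, hpa⟩, rfl, by omega⟩
    · rintro (((⟨c, ⟨hc, hpc⟩, rfl, rfl⟩ | ⟨c, ⟨hc, hpc⟩, rfl, rfl⟩) | ⟨c, ⟨hc, hpc⟩, rfl, rfl⟩) |
        ⟨c, ⟨hc, hpc⟩, rfl, rfl⟩)
      · refine ⟨⟨hn0, hc⟩, fun hd => hpc hd.2, ?_⟩
        simp
      · refine ⟨⟨hc, hn0⟩, fun hd => hpc hd.1, ?_⟩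
        simp
      · refine ⟨⟨hc, hc⟩, fun hd => hpc hd.1, ?_⟩
        simp
      · have hc0 : c ≠ 0 := fun h => hpc (h ▸ dvd_zero p)
        refine ⟨⟨hc, by omega⟩, fun hd => hpc hd.1, ?_⟩
        have : ((n - c : ℕ) : ℤ) + (c : ℤ) = (p:ℤ)^v := by
          rw [← hcast]; push_cast [Nat.cast_sub (le_of_lt hc)]; ring
        rw [this] at *
        exact Dvd.dvd.mul_left dvd_rfl _
  have hinj : ∀ f : ℕ → ℕ × ℕ, Set.InjOn f U → (U.image f).card = U.card := by
    intro f hf; exact Finset.card_image_of_injOn hf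
  have hd01 : Disjoint S0 S1 := by
    rw [Finset.disjoint_left]
    rintro ⟨x, y⟩ hx hy
    simp only [hS0, hS1, mem_image, hmemU, Prod.mk.injEq] at hx hy
    obtain ⟨c, ⟨_, hpc⟩, h1, h2⟩ := hy
    obtain ⟨c', ⟨_, hpc'⟩, h1', h2'⟩ := hx
    exact hpc (by rw [(by omega : c = 0)]; exact dvd_zero p)
  have hd012 : Disjoint (S0 ∪ S1) S2 := by
    rw [Finset.disjoint_left]
    rintro ⟨x, y⟩ hx hy
    simp only [hS0, hS1, hS2, mem_union, mem_image, hmemU, Prod.mk.injEq] at hx hy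
    obtain ⟨c, ⟨_, hpc⟩, h1, h2⟩ := hy
    rcases hx with ⟨c', ⟨_, _⟩, h1', h2'⟩ | ⟨c', ⟨_, hpc'⟩, h1', h2'⟩
    · exact hpc (by rw [(by omega : c = 0)]; exact dvd_zero p)
    · exact hpc (by rw [(by omega : c = 0)]; exact dvd_zero p)
  have hd3 : Disjoint ((S0 ∪ S1) ∪ S2) S3 := by
    rw [Finset.disjoint_left]
    rintro ⟨x, y⟩ hx hy
    simp only [hS0, hS1, hS2, hS3, mem_union, mem_image, hmemU, Prod.mk.injEq] at hx hy
    obtain ⟨c, ⟨hc, hpc⟩, h1, h2⟩ := hy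
    have hc0 : c ≠ 0 := fun h => hpc (h ▸ dvd_zero p)
    rcases hx with (⟨c', ⟨_, _⟩, h1', h2'⟩ | ⟨c', ⟨hc', hpc'⟩, h1', h2'⟩) | ⟨c', ⟨hc', hpc'⟩, h1', h2'⟩
    · exact hc0 (by omega)
    · omega
    · have h2c : 2 * c = n := by omega
      have : p ∣ 2 * c := h2c ▸ hpn
      rcases (Nat.Prime.dvd_mul hp).1 this with h' | h'
      · have := (Nat.prime_dvd_prime_iff_eq hp Nat.prime_two).1 h'
        rw [this] at hodd
        exact (Nat.not_odd_iff_even.2 (by norm_num)) hodd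
      · exact hpc h'
  rw [hset, Finset.card_union_of_disjoint hd3, Finset.card_union_of_disjoint hd012,
    Finset.card_union_of_disjoint hd01,
    hinj _ (fun x _ y _ h => (Prod.mk.injEq _ _ _ _ ▸ h).2),
    hinj _ (fun x _ y _ h => (Prod.mk.injEq _ _ _ _ ▸ h).1),
    hinj _ (fun x _ y _ h => (Prod.mk.injEq _ _ _ _ ▸ h).1),
    hinj _ (fun x hx y hy h => by
      rw [Finset.mem_coe, hmemU] at hx hy
      have := (Prod.mk.injEq _ _ _ _ ▸ h).2
      omega),
    hUcard]
  ring
end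

section
/- For v ≥ 1, the number of pairs (α, β) with 0 ≤ α, β < 2^v, α even and β odd, satisfying αβ(β - α)(β + α) ≡ 0 (mod 2^v) equals φ(2^v) = 2^{v-1}. -/
/-- For `v ≥ 1`, the number of pairs `(α,β)` with `0 ≤ α, β < 2^v`, `α` even and `β` odd,
with `2^v ∣ αβ(β-α)(β+α)` equals `φ(2^v) = 2^(v-1)`. -/
theorem stmt_15 (v : ℕ) (hv : 1 ≤ v) :
    ((Finset.range (2 ^ v) ×ˢ Finset.range (2 ^ v)).filter fun x =>
        Even x.1 ∧ Odd x.2 ∧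
          (2 : ℤ) ^ v ∣ (x.1 : ℤ) * (x.2 : ℤ) * ((x.2 : ℤ) - (x.1 : ℤ)) *
            ((x.2 : ℤ) + (x.1 : ℤ))).card = Nat.totient (2 ^ v) ∧
      Nat.totient (2 ^ v) = 2 ^ (v - 1) := by
  have htot : Nat.totient (2 ^ v) = 2 ^ (v - 1) := by
    rw [Nat.totient_prime_pow Nat.prime_two hv]
    ring
  refine ⟨?_, htot⟩
  have hS : ((Finset.range (2 ^ v) ×ˢ Finset.range (2 ^ v)).filter fun x =>
        Even x.1 ∧ Odd x.2 ∧
          (2 : ℤ) ^ v ∣ (x.1 : ℤ) * (x.2 : ℤ) * ((x.2 : ℤ) - (x.1 : ℤ)) *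
            ((x.2 : ℤ) + (x.1 : ℤ)))
      = ({0} : Finset ℕ) ×ˢ ((Finset.range (2 ^ v)).filter fun b => Odd b) := by
    ext ⟨a, b⟩
    simp only [Finset.mem_filter, Finset.mem_product, Finset.mem_range, Finset.mem_singleton]
    constructor
    · rintro ⟨⟨ha, hb⟩, hae, hbo, hdvd⟩
      refine ⟨?_, hb, hbo⟩
      -- the three factors other than α are odd
      have hbo' : Odd (b : ℤ) := by exact_mod_cast hbo
      have hae' : Even (a : ℤ) := by exact_mod_cast hae
      have h1 : Odd ((b : ℤ) - a) := hbo'.sub_even hae'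
      have h2 : Odd ((b : ℤ) + a) := hbo'.add_even hae'
      have hcop : IsCoprime ((2 : ℤ) ^ v) ((b : ℤ) * ((b : ℤ) - a) * ((b : ℤ) + a)) := by
        apply IsCoprime.pow_left
        have h2p : Prime (2 : ℤ) := Int.prime_two
        rw [h2p.coprime_iff_not_dvd]
        intro hdvd2
        exact (Int.not_odd_iff_even.mpr (even_iff_two_dvd.mpr hdvd2)) ((hbo'.mul h1).mul h2)
      have hdvd' : (2 : ℤ) ^ v ∣ (a : ℤ) * ((b : ℤ) * ((b : ℤ) - a) * ((b : ℤ) + a)) := by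
        have : (a : ℤ) * ((b : ℤ) * ((b : ℤ) - a) * ((b : ℤ) + a))
            = (a : ℤ) * (b : ℤ) * ((b : ℤ) - a) * ((b : ℤ) + a) := by ring
        rw [this]; exact hdvd
      have hda : (2 : ℤ) ^ v ∣ (a : ℤ) := hcop.dvd_of_dvd_mul_right hdvd'
      have hdan : 2 ^ v ∣ a := by
        have h' : ((2 ^ v : ℕ) : ℤ) ∣ (a : ℤ) := by exact_mod_cast hda
        exact_mod_cast h'
      exact Nat.eq_zero_of_dvd_of_lt hdan ha
    · rintro ⟨rfl, hb, hbo⟩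
      refine ⟨⟨by positivity, hb⟩, Even.zero, hbo, ?_⟩
      simp
  rw [hS, Finset.card_product, Finset.card_singleton, one_mul]
  rw [Nat.totient_eq_card_coprime]
  congr 1
  apply Finset.filter_congr
  intro b hb
  simp only [Nat.coprime_pow_left_iff (by omega : 0 < v)]
  exact Nat.coprime_two_left.symm
end
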